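/- Let G be a finite non-abelian p-group of order p^n (n ≥ 6), |G'| = p, and suppose G/G' is elementary abelian of rank n-1. Then |M(G)| ≥ p^{(n-1)(n-2)/2 - 1}. -/

import Mathlib

/-- The Schur multiplier `M(G) = H₂(G,ℤ)` of a group `G`, defined via the Hopf formula
`M(G) ≅ (R ∩ [F,F]) / [F,R]` for the free presentation `F = FreeGroup G ↠ G`. -/
abbrev schurMultiplier (G : Type*) [Group G] : Type _ :=
  ↥((FreeGroup.lift (id : G → G)).ker ⊓ commutator (FreeGroup G)) ⧸
    Subgroup.subgroupOf ⁅(⊤ : Subgroup (FreeGroup G)), (FreeGroup.lift (id : G → G)).ker⁆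
      ((FreeGroup.lift (id : G → G)).ker ⊓ commutator (FreeGroup G))

/-!
Let `F` be free on `G`, `R` the kernel of `F → G`, so that `M(G) = (R ∩ F') / [F, R]`.
A homomorphism `Φ : F → E` sending `R` into the centre kills `[F, R]`, hence
`|Φ(F')| ≤ [F' : [F, R]] = |M(G)| · |G'|`.
Take for `E` the central extension of `V = G/G' ≅ 𝔽_p^(n-1)` by `Λ²V` with cocycle
`(v, w) ↦ (v_i w_j)_{i<j}`, and for `Φ` a lift of `F → G → V`. Then `Φ` is onto, so
`Φ(F') = E' ≅ Λ²V` has order `p^((n-1)(n-2)/2)`, and `|M(G)| ≥ p^((n-1)(n-2)/2 - 1)`.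
-/

open Subgroup
open scoped commutatorElement

section Central

variable {H : Type*} [Group H]

theorem commutatorElement_mul_right_of_mem_center {z : H} (hz : z ∈ center H) (a b : H) :
    ⁅a, b * z⁆ = ⁅a, b⁆ := by
  have hza : z * a⁻¹ = a⁻¹ * z := (mem_center_iff.mp hz a⁻¹).symm
  calc ⁅a, b * z⁆ = a * b * (z * a⁻¹) * z⁻¹ * b⁻¹ := by group
    _ = ⁅a, b⁆ := by rw [hza]; group

theorem commutatorElement_mul_left_of_mem_center {z : H} (hz : z ∈ center H) (a b : H) :
    ⁅a * z, b⁆ = ⁅a, b⁆ := by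
  rw [← commutatorElement_inv, commutatorElement_mul_right_of_mem_center hz,
    commutatorElement_inv]

theorem finite_commutatorSet_of_finiteIndex_center [(center H).FiniteIndex] :
    Finite (commutatorSet H) := by
  refine Set.Finite.to_subtype <| (Set.finite_range
    fun q : (H ⧸ center H) × (H ⧸ center H) => ⁅q.1.out, q.2.out⁆).subset ?_
  rintro _ ⟨a, b, rfl⟩
  obtain ⟨z, hz⟩ := QuotientGroup.mk_out_eq_mul (center H) a
  obtain ⟨w, hw⟩ := QuotientGroup.mk_out_eq_mul (center H) b
  refine ⟨((a : H ⧸ center H), (b : H ⧸ center H)), ?_⟩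
  simp only [hz, hw, commutatorElement_mul_left_of_mem_center z.2,
    commutatorElement_mul_right_of_mem_center w.2]

end Central

theorem commutator_top_le_ker_of_map_le_center {F E : Type*} [Group F] [Group E] (f : F →* E)
    {R : Subgroup F} (hR : R.map f ≤ center E) : ⁅(⊤ : Subgroup F), R⁆ ≤ f.ker := by
  rw [← Subgroup.map_eq_bot_iff, map_commutator, eq_bot_iff]
  exact (commutator_mono le_rfl hR).trans (commutator_center_right _).le

theorem map_commutator_of_surjective {F E : Type*} [Group F] [Group E] {f : F →* E}
    (hf : Function.Surjective f) : (commutator F).map f = commutator E := by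
  rw [commutator_def, commutator_def, map_commutator, map_top_of_surjective f hf]

theorem relIndex_ker_commutator {F G : Type*} [Group F] [Group G] {π : F →* G}
    (hπ : Function.Surjective π) : π.ker.relIndex (commutator F) = Nat.card (commutator G) := by
  rw [relIndex_ker, map_commutator_of_surjective hπ]

theorem relIndex_commutator_top_commutator_ne_zero {F : Type*} [Group F] (R : Subgroup F)
    [R.Normal] [R.FiniteIndex] : ⁅(⊤ : Subgroup F), R⁆.relIndex (commutator F) ≠ 0 := by
  set N := ⁅(⊤ : Subgroup F), R⁆
  -- `R / N` is central of finite index in `F / N`, so Schur's theorem makes `(F / N)'` finite.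
  have hsurj := QuotientGroup.mk'_surjective N
  have hcentral : R.map (QuotientGroup.mk' N) ≤ center (F ⧸ N) := by
    rw [← commutator_top_left_eq_bot_iff_le_center, ← map_top_of_surjective _ hsurj,
      ← map_commutator, Subgroup.map_eq_bot_iff, QuotientGroup.ker_mk']
  have : (R.map (QuotientGroup.mk' N)).FiniteIndex :=
    ⟨by rw [R.index_map_eq hsurj (by rw [QuotientGroup.ker_mk']; exact commutator_le_right _ _)]
        exact FiniteIndex.index_ne_zero⟩
  have : (center (F ⧸ N)).FiniteIndex := finiteIndex_of_le hcentral
  have := finite_commutatorSet_of_finiteIndex_center (H := F ⧸ N)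
  rw [← QuotientGroup.ker_mk' N, relIndex_ker_commutator hsurj]
  exact Nat.card_pos.ne'

theorem card_map_commutator_le_card_schurMultiplier_mul {G E : Type*} [Group G] [Group E]
    [Finite G] (Φ : FreeGroup G →* E)
    (hΦ : (FreeGroup.lift (id : G → G)).ker.map Φ ≤ center E) :
    Nat.card ((commutator (FreeGroup G)).map Φ) ≤
      Nat.card (schurMultiplier G) * Nat.card (commutator G) := by
  set π : FreeGroup G →* G := FreeGroup.lift id
  have hπ : Function.Surjective π := fun g => ⟨FreeGroup.of g, FreeGroup.lift_apply_of⟩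
  set R := π.ker
  set D := commutator (FreeGroup G)
  set N := ⁅(⊤ : Subgroup (FreeGroup G)), R⁆
  have hN : N ≤ R ⊓ D := le_inf (commutator_le_right _ _) (commutator_mono le_top le_top)
  calc Nat.card (D.map Φ) = Φ.ker.relIndex D := (relIndex_ker D Φ).symm
    _ ≤ N.relIndex D := relIndex_le_of_le_left (commutator_top_le_ker_of_map_le_center Φ hΦ)
        (relIndex_commutator_top_commutator_ne_zero R)
    _ = N.relIndex (R ⊓ D) * (R ⊓ D).relIndex D :=
      (relIndex_mul_relIndex _ _ _ hN inf_le_right).symm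
    _ = Nat.card (schurMultiplier G) * Nat.card (commutator G) := by
      rw [inf_relIndex_right, relIndex_ker_commutator hπ]; rfl

@[ext]
structure CocycleExt {V W : Type*} [AddCommGroup V] [AddCommGroup W] (β : V →+ V →+ W) where
  base : V
  fiber : W

namespace CocycleExt

variable {V W : Type*} [AddCommGroup V] [AddCommGroup W] {β : V →+ V →+ W}

instance : Mul (CocycleExt β) :=
  ⟨fun a b => ⟨a.base + b.base, a.fiber + b.fiber + β a.base b.base⟩⟩
instance : One (CocycleExt β) := ⟨⟨0, 0⟩⟩
instance : Inv (CocycleExt β) := ⟨fun a => ⟨-a.base, -a.fiber + β a.base a.base⟩⟩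

@[simp] lemma mul_base (a b : CocycleExt β) : (a * b).base = a.base + b.base := rfl
@[simp] lemma mul_fiber (a b : CocycleExt β) :
    (a * b).fiber = a.fiber + b.fiber + β a.base b.base := rfl
@[simp] lemma one_base : (1 : CocycleExt β).base = 0 := rfl
@[simp] lemma one_fiber : (1 : CocycleExt β).fiber = 0 := rfl
@[simp] lemma inv_base (a : CocycleExt β) : a⁻¹.base = -a.base := rfl
@[simp] lemma inv_fiber (a : CocycleExt β) : a⁻¹.fiber = -a.fiber + β a.base a.base := rfl

instance : Group (CocycleExt β) where
  mul_assoc a b c := by ext <;> simp <;> abel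
  one_mul a := by ext <;> simp
  mul_one a := by ext <;> simp
  inv_mul_cancel a := by ext <;> simp

def fstHom : CocycleExt β →* Multiplicative V where
  toFun a := .ofAdd a.base
  map_one' := rfl
  map_mul' _ _ := rfl

def inr : Multiplicative W →* CocycleExt β where
  toFun w := ⟨0, w.toAdd⟩
  map_one' := rfl
  map_mul' _ _ := by ext <;> simp

lemma inr_injective : Function.Injective (inr (β := β)) :=
  fun _ _ h => congrArg fiber h

lemma range_inr : (inr (β := β)).range = fstHom.ker := by
  ext a
  refine ⟨?_, fun ha => ⟨.ofAdd a.fiber, ?_⟩⟩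
  · rintro ⟨w, rfl⟩
    rfl
  · ext
    · exact ha.symm
    · rfl

lemma ker_fstHom_le_center : (fstHom (β := β)).ker ≤ center (CocycleExt β) := by
  rw [← range_inr]
  rintro _ ⟨w, rfl⟩
  rw [mem_center_iff]
  intro a
  ext <;> simp [inr]
  abel

lemma commutatorElement_eq (a b : CocycleExt β) :
    ⁅a, b⁆ = inr (.ofAdd (β a.base b.base - β b.base a.base)) := by
  ext <;> simp [commutatorElement_def, inr]
  abel

variable {G : Type*} [Group G] (ν : G →* Multiplicative V)

def freeLift : FreeGroup G →* CocycleExt β :=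
  FreeGroup.lift fun g => ⟨(ν g).toAdd, 0⟩

lemma fstHom_comp_freeLift : fstHom.comp (freeLift (β := β) ν) = ν.comp (FreeGroup.lift id) :=
  FreeGroup.ext_hom _ _ fun _ => by simp [freeLift, fstHom]

lemma map_ker_freeLift_le_center :
    (FreeGroup.lift (id : G → G)).ker.map (freeLift (β := β) ν) ≤
      center (CocycleExt β) := by
  rintro _ ⟨r, hr, rfl⟩
  apply ker_fstHom_le_center
  rw [MonoidHom.mem_ker, ← MonoidHom.comp_apply, fstHom_comp_freeLift, MonoidHom.comp_apply,
    hr, map_one]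

section Spanning

variable (hβ : AddSubgroup.closure (Set.range fun p : V × V => β p.1 p.2 - β p.2 p.1) = ⊤)
include hβ

lemma range_inr_le {S : Subgroup (CocycleExt β)}
    (hS : ∀ v w : V, ⁅(⟨v, 0⟩ : CocycleExt β), ⟨w, 0⟩⁆ ∈ S) : inr.range ≤ S := by
  suffices ∀ w : W, inr (.ofAdd w) ∈ S from fun _ ⟨w, hw⟩ => hw ▸ this w.toAdd
  intro w
  have hw : w ∈ AddSubgroup.closure (Set.range fun p : V × V => β p.1 p.2 - β p.2 p.1) :=
    hβ ▸ AddSubgroup.mem_top w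
  induction hw using AddSubgroup.closure_induction with
  | mem _ h =>
    obtain ⟨⟨v, w⟩, rfl⟩ := h
    simpa [commutatorElement_eq] using hS v w
  | zero => exact S.one_mem
  | add _ _ _ _ hx hy => simpa only [ofAdd_add, map_mul] using S.mul_mem hx hy
  | neg _ _ hx => simpa only [ofAdd_neg, map_inv] using S.inv_mem hx

lemma commutator_eq_ker_fstHom : commutator (CocycleExt β) = (fstHom (β := β)).ker :=
  le_antisymm (Abelianization.commutator_subset_ker _) <| range_inr (β := β) ▸
    range_inr_le hβ fun _ _ => commutator_mem_commutator (mem_top _) (mem_top _)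

lemma card_commutator : Nat.card (commutator (CocycleExt β)) = Nat.card W := by
  rw [commutator_eq_ker_fstHom hβ, ← range_inr]
  exact (Nat.card_congr (MonoidHom.ofInjective inr_injective).toEquiv).symm

lemma eq_top_of_forall_mem {S : Subgroup (CocycleExt β)} (hS : ∀ v : V, ⟨v, 0⟩ ∈ S) :
    S = ⊤ := by
  have hinr := range_inr_le hβ fun v w => S.mul_mem (S.mul_mem (S.mul_mem (hS v) (hS w))
    (S.inv_mem (hS v))) (S.inv_mem (hS w))
  refine eq_top_iff.mpr fun a _ => ?_
  have ha : a = ⟨a.base, 0⟩ * inr (.ofAdd a.fiber) := by ext <;> simp [inr]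
  exact ha ▸ S.mul_mem (hS a.base) (hinr ⟨_, rfl⟩)

lemma freeLift_surjective (hν : Function.Surjective ν) :
    Function.Surjective (freeLift (β := β) ν) := by
  rw [← MonoidHom.range_eq_top]
  refine eq_top_of_forall_mem hβ fun v => ?_
  obtain ⟨g, hg⟩ := hν (.ofAdd v)
  exact ⟨FreeGroup.of g, by simp [freeLift, hg]⟩

end Spanning

end CocycleExt

section Wedge

variable (R : Type*) [Ring R] (m : ℕ)

/-- The alternation `β v w - β w v` of this cocycle is `v ∧ w` in the coordinates `e_i ∧ e_j`
(`i < j`). -/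
def wedgeCocycle :
    (Fin m → R) →+ (Fin m → R) →+ ({q : Fin m × Fin m // q.1 < q.2} → R) :=
  AddMonoidHom.mk' (fun v => AddMonoidHom.mk' (fun w q => v q.1.1 * w q.1.2)
    fun _ _ => by ext; simp [mul_add]) fun _ _ => by ext; simp [add_mul]

variable {R m}

lemma wedgeCocycle_sub_swap_single {i j : Fin m} (h : i < j) (r : R) :
    wedgeCocycle R m (Pi.single i r) (Pi.single j 1) -
      wedgeCocycle R m (Pi.single j 1) (Pi.single i r) = Pi.single ⟨(i, j), h⟩ r := by
  ext ⟨⟨a, b⟩, hab⟩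
  simp only [wedgeCocycle, AddMonoidHom.mk'_apply, Pi.sub_apply, Pi.single_apply,
    Subtype.mk.injEq, Prod.mk.injEq]
  split_ifs <;> simp_all
  order

lemma closure_range_wedgeCocycle_sub_swap :
    AddSubgroup.closure (Set.range fun p : (Fin m → R) × (Fin m → R) =>
      wedgeCocycle R m p.1 p.2 - wedgeCocycle R m p.2 p.1) = ⊤ := by
  refine eq_top_iff.mpr fun c _ => ?_
  rw [← Finset.univ_sum_single c]
  exact AddSubgroup.sum_mem _ fun ⟨(i, j), h⟩ _ =>
    AddSubgroup.subset_closure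
      ⟨(Pi.single i (c _), Pi.single j 1), wedgeCocycle_sub_swap_single h _⟩

lemma card_fin_pairs_lt : Nat.card {q : Fin m × Fin m // q.1 < q.2} = m.choose 2 := by
  rw [Nat.card_eq_fintype_card, Fintype.card_subtype, Fintype.card_product_filter_lt,
    Fintype.card_fin]

end Wedge

theorem nonempty_linearEquiv_fin_fun_of_card_eq_pow {K V : Type*} [DivisionRing K] [Finite K]
    [AddCommGroup V] [Module K V] [Finite V] {m : ℕ} (hcard : Nat.card V = Nat.card K ^ m) :
    Nonempty (V ≃ₗ[K] (Fin m → K)) := by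
  have : Module.Finite K V := Module.Finite.of_finite
  have hrank : Module.finrank K V = m :=
    Nat.pow_right_injective Finite.one_lt_card (Module.natCard_eq_pow_finrank.symm.trans hcard)
  exact ⟨(Module.finBasisOfFinrankEq K V hrank).equivFun⟩

theorem nonempty_addEquiv_pi_zmod_of_card_eq_pow {p m : ℕ} [Fact p.Prime] {V : Type*}
    [AddCommGroup V] (hcard : Nat.card V = p ^ m) (hexp : ∀ x : V, p • x = 0) :
    Nonempty (V ≃+ (Fin m → ZMod p)) := by
  let _ : Module (ZMod p) V := AddCommGroup.zmodModule hexp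
  have : Finite V :=
    Nat.finite_of_card_ne_zero (hcard ▸ pow_ne_zero _ (Fact.out : p.Prime).ne_zero)
  obtain ⟨e⟩ := nonempty_linearEquiv_fin_fun_of_card_eq_pow (K := ZMod p) (V := V) (m := m)
    (by rw [Nat.card_zmod, hcard])
  exact ⟨e.toAddEquiv⟩

theorem pow_sub_one_le_of_pow_le_mul {p k x : ℕ} (hp : 0 < p) (h : p ^ k ≤ x * p) :
    p ^ (k - 1) ≤ x := by
  rcases k with _ | k
  · exact Nat.pos_of_ne_zero fun hx => by simp [hx] at h
  · exact Nat.le_of_mul_le_mul_right (by rwa [pow_succ] at h) hp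

theorem card_schurMultiplier_ge_of_commutator_card_p_general (p n : ℕ) (hp : p.Prime)
    (G : Type*) [Group G]
    (hG' : Nat.card (commutator G) = p)
    (hcard : Nat.card (Abelianization G) = p ^ (n - 1))
    (helem : ∀ x : Abelianization G, x ^ p = 1) :
    p ^ ((n - 1) * (n - 2) / 2 - 1) ≤ Nat.card (schurMultiplier G) := by
  have : Fact p.Prime := ⟨hp⟩
  have : Finite G := Nat.finite_of_card_ne_zero <| by
    rw [(commutator G).card_eq_card_quotient_mul_card_subgroup]
    exact mul_ne_zero (hcard.trans_ne (pow_ne_zero _ hp.ne_zero)) (hG' ▸ hp.ne_zero)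
  obtain ⟨e⟩ :=
    nonempty_addEquiv_pi_zmod_of_card_eq_pow (V := Additive (Abelianization G)) hcard
      fun x => congrArg Additive.ofMul (helem x.toMul)
  let ν : G →* Multiplicative (Fin (n - 1) → ZMod p) :=
    (AddEquiv.toMultiplicativeRight e).toMonoidHom.comp Abelianization.of
  have hν : Function.Surjective ν :=
    e.surjective.comp fun x => QuotientGroup.mk_surjective x
  let Φ : FreeGroup G →* CocycleExt (wedgeCocycle (ZMod p) (n - 1)) := CocycleExt.freeLift ν
  have hbound := card_map_commutator_le_card_schurMultiplier_mul Φ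
    (CocycleExt.map_ker_freeLift_le_center ν)
  rw [map_commutator_of_surjective
      (CocycleExt.freeLift_surjective ν closure_range_wedgeCocycle_sub_swap hν),
    CocycleExt.card_commutator closure_range_wedgeCocycle_sub_swap, Nat.card_fun, Nat.card_zmod,
    card_fin_pairs_lt, Nat.choose_two_right, hG'] at hbound
  rw [show n - 2 = n - 1 - 1 by omega]
  exact pow_sub_one_le_of_pow_le_mul hp.pos hbound

/-- If `G` is a finite non-abelian `p`-group of order `p^n` (`n ≥ 6`) with `|G'| = p` and
`G/G'` elementary abelian of rank `n - 1`, then `|M(G)| ≥ p^((n-1)(n-2)/2 - 1)`. -/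
theorem card_schurMultiplier_ge_of_commutator_card_p (p n : ℕ) (hp : p.Prime) (hn : 6 ≤ n)
    (G : Type*) [Group G] (hG : Nat.card G = p ^ n)
    (hna : ∃ a b : G, a * b ≠ b * a)
    (hG' : Nat.card (commutator G) = p)
    (hcard : Nat.card (Abelianization G) = p ^ (n - 1))
    (helem : ∀ x : Abelianization G, x ^ p = 1) :
    p ^ ((n - 1) * (n - 2) / 2 - 1) ≤ Nat.card (schurMultiplier G) :=
  card_schurMultiplier_ge_of_commutator_card_p_general p n hp G hG' hcard helem
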